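/- arXiv:1501.00787 — 2 statements merged into one kernel-verified Lean document; each statement's English description precedes it below -/
import Mathlib

section
/- Let n ≥ 2 and R a ring Lie nilpotent of index n. Then the two-sided ideal I(3) = R[[R,R],R]R generated by all double commutators [[a,b],c] is nilpotent; specifically I(3)^(2^(n-2)) = {0}. -/
/-- Left-normed commutator: `lnc x [x₂,…,x_k] = [x, x₂, …, x_k]*`. -/
def lnc {R : Type*} [Ring R] (x : R) (l : List R) : R :=
  l.foldl (fun a y => a * y - y * a) x

section Aux

variable {R : Type*} [Ring R]

lemma lnc_nil (x : R) : lnc x [] = x := rfl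

lemma lnc_cons (x y : R) (l : List R) : lnc x (y :: l) = lnc (x * y - y * x) l := rfl

lemma lnc_append (x : R) (l₁ l₂ : List R) : lnc x (l₁ ++ l₂) = lnc (lnc x l₁) l₂ :=
  List.foldl_append

lemma lnc_concat (x y : R) (l : List R) :
    lnc x (l ++ [y]) = lnc x l * y - y * lnc x l := by
  rw [lnc_append]; rfl

lemma lnc_zero (l : List R) : lnc (0 : R) l = 0 := by
  induction l with
  | nil => rfl
  | cons y l ih => rw [lnc_cons]; simpa using ih

/-- A custom induction principle for membership in a two-sided ideal span. -/
lemma tsi_span_induction {s : Set R} {p : R → Prop} (mem : ∀ x ∈ s, p x) (zero : p 0)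
    (add : ∀ x y, p x → p y → p (x + y)) (neg : ∀ x, p x → p (-x))
    (mul_left : ∀ r x, p x → p (r * x)) (mul_right : ∀ x r, p x → p (x * r)) {x : R}
    (hx : x ∈ TwoSidedIdeal.span s) : p x := by
  have h := TwoSidedIdeal.mem_span_iff.mp hx
    (TwoSidedIdeal.mk' {y : R | p y} zero (fun ha hb => add _ _ ha hb)
      (fun ha => neg _ ha) (fun hb => mul_left _ _ hb) (fun ha => mul_right _ _ ha))
    (fun y hy => by simpa using mem y hy)
  simpa using h

/-- The two-sided ideal generated by left-normed commutators of length `≥ d` (i.e. of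
weight `≥ d+1`). -/
def TI (d : ℕ) : TwoSidedIdeal R :=
  TwoSidedIdeal.span {z : R | ∃ x l, d ≤ List.length l ∧ z = lnc x l}

lemma lnc_mem_TI {d : ℕ} (x : R) (l : List R) (h : d ≤ l.length) : lnc x l ∈ TI d :=
  TwoSidedIdeal.subset_span ⟨x, l, h, rfl⟩

/-- Left-normed commutators of length exactly `k`. -/
def LNCset (k : ℕ) : Set R := {z : R | ∃ x l, List.length l = k ∧ z = lnc x l}

lemma bracket_closure {k : ℕ} {z : R} (hz : z ∈ AddSubgroup.closure (LNCset (R := R) k))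
    (y : R) : z * y - y * z ∈ AddSubgroup.closure (LNCset (R := R) (k + 1)) := by
  induction hz using AddSubgroup.closure_induction with
  | mem w hw =>
    obtain ⟨x, l, hl, rfl⟩ := hw
    have : lnc x l * y - y * lnc x l = lnc x (l ++ [y]) := (lnc_concat x y l).symm
    rw [this]
    exact AddSubgroup.subset_closure ⟨x, l ++ [y], by simp [hl], rfl⟩
  | zero => simpa using AddSubgroup.zero_mem _
  | add a b _ _ ha hb =>
    have : (a + b) * y - y * (a + b) = (a * y - y * a) + (b * y - y * b) := by noncomm_ring
    rw [this]; exact AddSubgroup.add_mem _ ha hb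
  | neg a _ ha =>
    have : (-a) * y - y * (-a) = -(a * y - y * a) := by noncomm_ring
    rw [this]; exact AddSubgroup.neg_mem _ ha

/-- The commutator of two left-normed commutators is an additive combination of
left-normed commutators of the total length. -/
lemma comm_mem_closure (lv : List R) (b a : R) (lu : List R) :
    lnc a lu * lnc b lv - lnc b lv * lnc a lu ∈
      AddSubgroup.closure (LNCset (R := R) (lu.length + lv.length + 1)) := by
  induction lv using List.reverseRecOn generalizing a lu with
  | nil =>
    have : lnc a lu * lnc b [] - lnc b [] * lnc a lu = lnc a (lu ++ [b]) := by
      rw [lnc_nil, lnc_concat]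
    rw [this]
    exact AddSubgroup.subset_closure ⟨a, lu ++ [b], by simp, rfl⟩
  | append_singleton l₂ y ih =>
    rw [lnc_concat]
    set u := lnc a lu with hu
    set v₁ := lnc b l₂ with hv₁
    have h1 : u * v₁ - v₁ * u ∈
        AddSubgroup.closure (LNCset (R := R) (lu.length + l₂.length + 1)) := ih a lu
    have h2 := bracket_closure h1 y
    have h3 : lnc a (lu ++ [y]) * v₁ - v₁ * lnc a (lu ++ [y]) ∈
        AddSubgroup.closure (LNCset (R := R) ((lu ++ [y]).length + l₂.length + 1)) :=
      ih a (lu ++ [y])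
    rw [lnc_concat] at h3
    have hlen : (lu ++ [y]).length + l₂.length + 1 = lu.length + l₂.length + 1 + 1 := by
      simp; omega
    rw [hlen] at h3
    have key : u * (v₁ * y - y * v₁) - (v₁ * y - y * v₁) * u =
        ((u * v₁ - v₁ * u) * y - y * (u * v₁ - v₁ * u)) -
          ((u * y - y * u) * v₁ - v₁ * (u * y - y * u)) := by noncomm_ring
    have hlen2 : lu.length + (l₂ ++ [y]).length + 1 = lu.length + l₂.length + 1 + 1 := by
      simp; omega
    rw [key, hlen2]
    exact AddSubgroup.sub_mem _ h2 h3

lemma closure_LNC_le_TI {k d : ℕ} (h : d ≤ k) {z : R}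
    (hz : z ∈ AddSubgroup.closure (LNCset (R := R) k)) : z ∈ TI d := by
  induction hz using AddSubgroup.closure_induction with
  | mem w hw => obtain ⟨x, l, hl, rfl⟩ := hw; exact lnc_mem_TI x l (hl ▸ h)
  | zero => exact (TI d).zero_mem
  | add a b _ _ ha hb => exact (TI d).add_mem ha hb
  | neg a _ ha => exact (TI d).neg_mem ha

/-- The key ring identity behind the one-step Gupta–Levin lemma. -/
lemma key_identity (u₁ x v₁ y : R) :
    (u₁ * x - x * u₁) * (v₁ * y - y * v₁) =
      ((u₁ * (x * v₁) - (x * v₁) * u₁) * y - y * (u₁ * (x * v₁) - (x * v₁) * u₁))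
      - ((u₁ * y - y * u₁) * (x * v₁) - (x * v₁) * (u₁ * y - y * u₁))
      - (((u₁ * x - x * u₁) * y - y * (u₁ * x - x * u₁)) * v₁)
      + (((u₁ * y - y * u₁) * x - x * (u₁ * y - y * u₁)) * v₁)
      - ((x * y - y * x) * (u₁ * v₁ - v₁ * u₁))
      - (x * (u₁ * (v₁ * y - y * v₁) - (v₁ * y - y * v₁) * u₁)) := by
  noncomm_ring

/-- Pure form of the one-step product lemma: the product of two left-normed commutators of
length `≥ d ≥ 2` lies in the ideal generated by left-normed commutators of length `≥ d+1`. -/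
lemma pure_mul {d : ℕ} (hd : 2 ≤ d) (a : R) (lu : List R) (hu : d ≤ lu.length)
    (b : R) (lv : List R) (hv : d ≤ lv.length) :
    lnc a lu * lnc b lv ∈ TI (R := R) (d + 1) := by
  rcases List.eq_nil_or_concat lu with rfl | ⟨lu₁, x, rfl⟩
  · simp at hu; omega
  rcases List.eq_nil_or_concat lv with rfl | ⟨lv₁, y, rfl⟩
  · simp at hv; omega
  rw [List.concat_eq_append] at hu ⊢
  rw [List.concat_eq_append] at hv ⊢
  rw [lnc_concat, lnc_concat]
  set u₁ := lnc a lu₁ with hu₁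
  set v₁ := lnc b lv₁ with hv₁def
  rw [key_identity]
  have hl1 : lu₁.length + 1 = (lu₁ ++ [x]).length := by simp
  have hl2 : lv₁.length + 1 = (lv₁ ++ [y]).length := by simp
  -- term 1 : [[u₁, x*v₁], y]
  have t1 : (u₁ * (x * v₁) - (x * v₁) * u₁) * y - y * (u₁ * (x * v₁) - (x * v₁) * u₁) ∈
      TI (R := R) (d + 1) := by
    have : (u₁ * (x * v₁) - (x * v₁) * u₁) * y - y * (u₁ * (x * v₁) - (x * v₁) * u₁) =
        lnc a (lu₁ ++ [x * v₁, y]) := by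
      rw [lnc_append, hu₁]; rfl
    rw [this]
    exact lnc_mem_TI _ _ (by simp at hu ⊢; omega)
  -- term 2 : [[u₁, y], x*v₁]
  have t2 : (u₁ * y - y * u₁) * (x * v₁) - (x * v₁) * (u₁ * y - y * u₁) ∈
      TI (R := R) (d + 1) := by
    have : (u₁ * y - y * u₁) * (x * v₁) - (x * v₁) * (u₁ * y - y * u₁) =
        lnc a (lu₁ ++ [y, x * v₁]) := by
      rw [lnc_append, hu₁]; rfl
    rw [this]
    exact lnc_mem_TI _ _ (by simp at hu ⊢; omega)
  -- term 3 : [[u₁, x], y] * v₁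
  have t3 : ((u₁ * x - x * u₁) * y - y * (u₁ * x - x * u₁)) * v₁ ∈ TI (R := R) (d + 1) := by
    have : (u₁ * x - x * u₁) * y - y * (u₁ * x - x * u₁) = lnc a (lu₁ ++ [x, y]) := by
      rw [lnc_append, hu₁]; rfl
    rw [this]
    exact (TI (d + 1)).mul_mem_right _ _ (lnc_mem_TI _ _ (by simp at hu ⊢; omega))
  -- term 4 : [[u₁, y], x] * v₁
  have t4 : ((u₁ * y - y * u₁) * x - x * (u₁ * y - y * u₁)) * v₁ ∈ TI (R := R) (d + 1) := by
    have : (u₁ * y - y * u₁) * x - x * (u₁ * y - y * u₁) = lnc a (lu₁ ++ [y, x]) := by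
      rw [lnc_append, hu₁]; rfl
    rw [this]
    exact (TI (d + 1)).mul_mem_right _ _ (lnc_mem_TI _ _ (by simp at hu ⊢; omega))
  -- term 5 : [x, y] * [u₁, v₁]
  have t5 : (x * y - y * x) * (u₁ * v₁ - v₁ * u₁) ∈ TI (R := R) (d + 1) := by
    refine (TI (d + 1)).mul_mem_left _ _ ?_
    refine closure_LNC_le_TI (k := lu₁.length + lv₁.length + 1) ?_ (comm_mem_closure lv₁ b a lu₁)
    simp at hu hv; omega
  -- term 6 : x * [u₁, v]
  have t6 : x * (u₁ * (v₁ * y - y * v₁) - (v₁ * y - y * v₁) * u₁) ∈ TI (R := R) (d + 1) := by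
    refine (TI (d + 1)).mul_mem_left _ _ ?_
    have hc := comm_mem_closure (lv₁ ++ [y]) b a lu₁
    rw [lnc_concat] at hc
    refine closure_LNC_le_TI (k := lu₁.length + (lv₁ ++ [y]).length + 1) ?_ hc
    simp at hu hv ⊢; omega
  exact (TI (d+1)).sub_mem ((TI (d+1)).sub_mem ((TI (d+1)).add_mem
    ((TI (d+1)).sub_mem ((TI (d+1)).sub_mem t1 t2) t3) t4) t5) t6

/-- One-step Gupta–Levin: `T(d) * T(d) ⊆ T(d+1)` for `d ≥ 2`. -/
lemma TI_mul_aux {d : ℕ} (hd : 2 ≤ d) {b : R} (hb : b ∈ TI (R := R) d) :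
    ∀ (a : R) (lu : List R), d ≤ lu.length → lnc a lu * b ∈ TI (R := R) (d + 1) := by
  refine tsi_span_induction (p := fun b => ∀ (a : R) (lu : List R), d ≤ lu.length →
    lnc a lu * b ∈ TI (R := R) (d + 1)) ?_ ?_ ?_ ?_ ?_ ?_ hb
  · rintro z ⟨x, l, hl, rfl⟩ a lu hlu
    exact pure_mul hd a lu hlu x l hl
  · intro a lu _
    simpa using (TI (d+1)).zero_mem
  · intro z w hz hw a lu hlu
    rw [mul_add]
    exact (TI (d+1)).add_mem (hz a lu hlu) (hw a lu hlu)
  · intro z hz a lu hlu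
    rw [mul_neg]
    exact (TI (d+1)).neg_mem (hz a lu hlu)
  · intro r z hz a lu hlu
    have key : lnc a lu * (r * z) =
        r * (lnc a lu * z) + (lnc a lu * r - r * lnc a lu) * z := by noncomm_ring
    have h2 : (lnc a lu * r - r * lnc a lu) * z = lnc a (lu ++ [r]) * z := by
      rw [lnc_concat]
    rw [key, h2]
    exact (TI (d+1)).add_mem ((TI (d+1)).mul_mem_left _ _ (hz a lu hlu))
      (hz a (lu ++ [r]) (by simp; omega))
  · intro z r hz a lu hlu
    rw [← mul_assoc]
    exact (TI (d+1)).mul_mem_right _ _ (hz a lu hlu)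

lemma TI_mul {d : ℕ} (hd : 2 ≤ d) {x y : R} (hx : x ∈ TI (R := R) d)
    (hy : y ∈ TI (R := R) d) : x * y ∈ TI (R := R) (d + 1) := by
  refine tsi_span_induction (p := fun x => ∀ y, y ∈ TI (R := R) d →
    x * y ∈ TI (R := R) (d + 1)) ?_ ?_ ?_ ?_ ?_ ?_ hx y hy
  · rintro z ⟨x, l, hl, rfl⟩ y hy
    exact TI_mul_aux hd hy x l hl
  · intro y _
    simpa using (TI (d+1)).zero_mem
  · intro z w hz hw y hy
    rw [add_mul]
    exact (TI (d+1)).add_mem (hz y hy) (hw y hy)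
  · intro z hz y hy
    rw [neg_mul]
    exact (TI (d+1)).neg_mem (hz y hy)
  · intro r z hz y hy
    rw [mul_assoc]
    exact (TI (d+1)).mul_mem_left _ _ (hz y hy)
  · intro z r hz y hy
    rw [mul_assoc]
    exact hz (r * y) ((TI d).mul_mem_left _ _ hy)

lemma prod_pow_mem (k : ℕ) : ∀ (L : List R), (∀ z ∈ L, z ∈ TI (R := R) 2) →
    L.length = 2 ^ k → L.prod ∈ TI (R := R) (k + 2) := by
  induction k with
  | zero =>
    intro L hL hlen
    rw [pow_zero] at hlen
    obtain ⟨z, rfl⟩ := List.length_eq_one_iff.mp hlen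
    simpa using hL z (by simp)
  | succ k ih =>
    intro L hL hlen
    have hsplit : L = L.take (2 ^ k) ++ L.drop (2 ^ k) := (List.take_append_drop _ _).symm
    have hpow : 2 ^ (k + 1) = 2 ^ k + 2 ^ k := by rw [pow_succ]; omega
    have h1 : (L.take (2 ^ k)).length = 2 ^ k := by
      rw [List.length_take, hlen, hpow]; omega
    have h2 : (L.drop (2 ^ k)).length = 2 ^ k := by
      rw [List.length_drop, hlen, hpow]; omega
    have m1 : (L.take (2 ^ k)).prod ∈ TI (R := R) (k + 2) :=
      ih _ (fun z hz => hL z (List.mem_of_mem_take hz)) h1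
    have m2 : (L.drop (2 ^ k)).prod ∈ TI (R := R) (k + 2) :=
      ih _ (fun z hz => hL z (List.mem_of_mem_drop hz)) h2
    have : L.prod = (L.take (2 ^ k)).prod * (L.drop (2 ^ k)).prod := by
      conv_lhs => rw [hsplit]
      rw [List.prod_append]
    rw [this]
    exact TI_mul (by omega) m1 m2

end Aux

theorem double_commutator_ideal_nilpotent {R : Type*} [Ring R] (n : ℕ) (hn : 2 ≤ n)
    (hLn : ∀ (x : R) (l : List R), l.length = n → lnc x l = 0)
    (f : Fin (2 ^ (n - 2)) → R)
    (hf : ∀ i, f i ∈ TwoSidedIdeal.span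
      {z : R | ∃ a b c : R, z = (a * b - b * a) * c - c * (a * b - b * a)}) :
    (List.ofFn f).prod = 0 := by
  -- long left-normed commutators vanish
  have hz : ∀ (x : R) (l : List R), n ≤ l.length → lnc x l = 0 := by
    intro x l hl
    have : l = l.take n ++ l.drop n := (List.take_append_drop _ _).symm
    rw [this, lnc_append, hLn x (l.take n) (by rw [List.length_take]; omega), lnc_zero]
  -- the generators lie in TI 2
  have h2 : ∀ i, f i ∈ TI (R := R) 2 := by
    intro i
    refine tsi_span_induction (p := fun z => z ∈ TI (R := R) 2) ?_ ?_ ?_ ?_ ?_ ?_ (hf i)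
    · rintro z ⟨a, b, c, rfl⟩
      have : (a * b - b * a) * c - c * (a * b - b * a) = lnc a [b, c] := rfl
      rw [this]
      exact lnc_mem_TI a [b, c] (by simp)
    · exact (TI 2).zero_mem
    · exact fun x y hx hy => (TI 2).add_mem hx hy
    · exact fun x hx => (TI 2).neg_mem hx
    · exact fun r x hx => (TI 2).mul_mem_left _ _ hx
    · exact fun x r hx => (TI 2).mul_mem_right _ _ hx
  -- the product lies in TI n
  have hprod : (List.ofFn f).prod ∈ TI (R := R) n := by
    have hmem : ∀ z ∈ List.ofFn f, z ∈ TI (R := R) 2 := by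
      intro z hzz
      obtain ⟨i, rfl⟩ := List.mem_ofFn.mp hzz
      exact h2 i
    have := prod_pow_mem (n - 2) (List.ofFn f) hmem (by simp)
    have hn2 : n - 2 + 2 = n := by omega
    rwa [hn2] at this
  -- every element of TI n is zero
  refine tsi_span_induction (p := fun z => z = (0 : R)) ?_ rfl ?_ ?_ ?_ ?_ hprod
  · rintro z ⟨x, l, hl, rfl⟩
    exact hz x l hl
  · rintro x y rfl rfl; simp
  · rintro x rfl; simp
  · rintro r x rfl; simp
  · rintro x r rfl; simp
end

section
/- Let R be a Lie nilpotent ring in which every prime two-sided ideal is finitely generated as a left ideal. Then every left ideal of R containing the prime radical rad(R) is finitely generated as a left ideal. -/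
lemma lnc_append_s17 {R : Type*} [Ring R] (x : R) (l : List R) (y : R) :
    lnc x (l ++ [y]) = lnc x l * y - y * lnc x l := by
  simp [lnc, List.foldl_append]

lemma comm_mem_prime {R : Type*} [Ring R] (n : ℕ) (hn : 1 ≤ n)
    (hLn : ∀ (x : R) (l : List R), l.length = n → lnc x l = 0)
    (P : TwoSidedIdeal R)
    (hP : ∀ a b : R, (∀ r : R, a * r * b ∈ P) → a ∈ P ∨ b ∈ P)
    (x y : R) : x * y - y * x ∈ P := by
  have step : ∀ m : ℕ, 2 ≤ m →
      (∀ (x : R) (l : List R), l.length = m → lnc x l ∈ P) →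
      ∀ (x : R) (l : List R), l.length = m - 1 → lnc x l ∈ P := by
    intro m hm h x l hl
    have hne : l ≠ [] := by
      intro h0; rw [h0] at hl; simp at hl; omega
    set y := l.getLast hne with hy
    have hdecomp : l.dropLast ++ [y] = l := List.dropLast_append_getLast hne
    set u := lnc x l.dropLast with hu
    have hlen : l.dropLast.length = m - 2 := by
      rw [List.length_dropLast, hl]; omega
    have hA : ∀ s t : R, ((u * s - s * u) * t - t * (u * s - s * u)) ∈ P := by
      intro s t
      have h2 := h x ((l.dropLast ++ [s]) ++ [t]) (by simp [hlen]; omega)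
      rwa [lnc_append_s17, lnc_append_s17, ← hu] at h2
    have hc2 : (u * y - y * u) * (u * y - y * u) ∈ P := by
      have A := hA (y * u) y
      have B := hA y (y * u)
      have C := P.mul_mem_left y _ (hA y u)
      have e : (u * y - y * u) * (u * y - y * u) =
          (((u * (y * u) - (y * u) * u) * y - y * (u * (y * u) - (y * u) * u))
            + y * ((u * y - y * u) * u - u * (u * y - y * u)))
          - ((u * y - y * u) * (y * u) - (y * u) * (u * y - y * u)) := by noncomm_ring
      rw [e]
      exact P.sub_mem (P.add_mem A C) B
    have hcrc : ∀ r : R, (u * y - y * u) * r * (u * y - y * u) ∈ P := by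
      intro r
      have D := hA y (r * (u * y - y * u))
      have E := P.mul_mem_left r _ hc2
      have e : (u * y - y * u) * r * (u * y - y * u) =
          r * ((u * y - y * u) * (u * y - y * u)) +
          ((u * y - y * u) * (r * (u * y - y * u)) -
            (r * (u * y - y * u)) * (u * y - y * u)) := by noncomm_ring
      rw [e]
      exact P.add_mem E D
    have hc : u * y - y * u ∈ P := by
      rcases hP _ _ hcrc with h' | h' <;> exact h'
    rw [← hdecomp, lnc_append_s17, ← hu]
    exact hc
  have main : ∀ i : ℕ, i < n → ∀ (x : R) (l : List R), l.length = n - i → lnc x l ∈ P := by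
    intro i
    induction i with
    | zero =>
      intro _ x l hl
      rw [hLn x l (by simpa using hl)]
      exact P.zero_mem
    | succ i ih =>
      intro hi x l hl
      have := step (n - i) (by omega) (ih (by omega)) x l (by omega)
      exact this
  have := main (n - 1) (by omega) x [y] (by simp; omega)
  simpa [lnc] using this

theorem cohen_lie_nilpotent {R : Type*} [Ring R] (n : ℕ) (hn : 1 ≤ n)
    (hLn : ∀ (x : R) (l : List R), l.length = n → lnc x l = 0)
    (hprimesFG : ∀ P : TwoSidedIdeal R,
      (P ≠ ⊤ ∧ ∀ a b : R, (∀ r : R, a * r * b ∈ P) → a ∈ P ∨ b ∈ P) →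
      ∃ s : Finset R, (Submodule.span R (s : Set R) : Set R) = (P : Set R))
    (L : Submodule R R)
    (hL : {u : R | ∀ P : TwoSidedIdeal R,
        (P ≠ ⊤ ∧ ∀ a b : R, (∀ r : R, a * r * b ∈ P) → a ∈ P ∨ b ∈ P) → u ∈ P} ⊆ L) :
    L.FG := by
  classical
  by_contra hLfg
  set rad : Set R := {u : R | ∀ P : TwoSidedIdeal R,
      (P ≠ ⊤ ∧ ∀ a b : R, (∀ r : R, a * r * b ∈ P) → a ∈ P ∨ b ∈ P) → u ∈ P} with hrad
  have hcomm : ∀ a b : R, a * b - b * a ∈ rad := by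
    intro a b P hP
    exact comm_mem_prime n hn hLn P hP.2 a b
  set S : Set (Submodule R R) := {N | rad ⊆ ↑N ∧ ¬ N.FG} with hS
  have hLS : L ∈ S := ⟨hL, hLfg⟩
  have hub : ∀ c ⊆ S, IsChain (· ≤ ·) c → ∀ N ∈ c, ∃ ub ∈ S, ∀ z ∈ c, z ≤ ub := by
    intro c hcS hchain N hN
    refine ⟨sSup c, ⟨(hcS hN).1.trans ?_, ?_⟩, fun z hz => le_sSup hz⟩
    · exact SetLike.coe_subset_coe.2 (le_sSup hN)
    · rintro ⟨t, ht⟩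
      have hdir : DirectedOn (fun i j : Submodule R R => (i : Set R) ⊆ (j : Set R)) c := by
        intro a ha b hb
        obtain ⟨z, hz, h1, h2⟩ := hchain.directedOn a ha b hb
        exact ⟨z, hz, SetLike.coe_subset_coe.2 h1, SetLike.coe_subset_coe.2 h2⟩
      have hsub : (↑t : Set R) ⊆ ⋃ N' ∈ c, (N' : Set R) := by
        intro g hg
        have hg' : g ∈ sSup c := ht ▸ Submodule.subset_span hg
        rw [Submodule.mem_sSup_of_directed ⟨N, hN⟩ hchain.directedOn] at hg'
        obtain ⟨N', hN', hgN'⟩ := hg'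
        exact Set.mem_biUnion hN' hgN'
      obtain ⟨N', hN'c, htN'⟩ :=
        DirectedOn.exists_mem_subset_of_finset_subset_biUnion ⟨N, hN⟩ hdir hsub
      have h1 : sSup c ≤ N' := by
        rw [← ht]; exact Submodule.span_le.2 htN'
      exact (hcS hN'c).2 ⟨t, by rw [ht]; exact le_antisymm h1 (le_sSup hN'c)⟩
  obtain ⟨M, -, hMS, hMmax⟩ := zorn_le_nonempty₀ S hub L hLS
  -- M is maximal among non-f.g. left ideals containing rad
  have hMrad : rad ⊆ ↑M := hMS.1
  have hMright : ∀ m ∈ M, ∀ r : R, m * r ∈ M := by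
    intro m hm r
    have h1 : r * m ∈ M := M.smul_mem r hm
    have h2 : m * r - r * m ∈ M := hMrad (hcomm m r)
    simpa using M.add_mem h2 h1
  set P0 : TwoSidedIdeal R := TwoSidedIdeal.mk' (↑M) M.zero_mem
    (fun hx hy => M.add_mem hx hy) (fun hx => M.neg_mem hx)
    (fun {x y} hy => M.smul_mem x hy) (fun {x y} hx => hMright x hx y) with hP0
  have hmemP0 : ∀ z : R, z ∈ P0 ↔ z ∈ M := fun z =>
    TwoSidedIdeal.mem_mk' _ _ _ _ _ _ z
  have hne_top : P0 ≠ ⊤ := by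
    intro h
    have h1 : (1 : R) ∈ P0 := by rw [h]; trivial
    rw [hmemP0] at h1
    have hMtop : M = ⊤ := by
      rw [Submodule.eq_top_iff']
      intro r
      simpa using M.smul_mem r h1
    exact hMS.2 (hMtop ▸ ⟨{1}, by simpa using Ideal.span_singleton_one⟩)
  have hprime : ∀ a b : R, (∀ r : R, a * r * b ∈ P0) → a ∈ P0 ∨ b ∈ P0 := by
    intro a b hab
    by_contra hcon
    push_neg at hcon
    obtain ⟨ha, hb⟩ := hcon
    rw [hmemP0] at ha hb
    set T : Submodule R R := M ⊔ Submodule.span R {a} with hT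
    have haT : a ∈ T := Submodule.mem_sup_right (Submodule.mem_span_singleton_self a)
    have hTfg : T.FG := by
      by_contra hTfg
      have hTS : T ∈ S := ⟨hMrad.trans (SetLike.coe_subset_coe.2 le_sup_left), hTfg⟩
      exact ha (hMmax hTS le_sup_left haT)
    set N : Submodule R R :=
      { carrier := {x : R | x * a ∈ M}
        add_mem' := fun {x y} hx hy => by simpa [add_mul] using M.add_mem hx hy
        zero_mem' := by simp
        smul_mem' := fun r x hx => by
          simpa [smul_eq_mul, mul_assoc] using M.smul_mem r hx } with hN
    have hmemN : ∀ z : R, z ∈ N ↔ z * a ∈ M := fun z => Iff.rfl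
    have hMN : M ≤ N := fun m hm => hMright m hm a
    have hNrad : rad ⊆ ↑N := by
      intro u hu
      refine (hmemN u).2 (hMrad ?_)
      intro P hP
      exact P.mul_mem_right _ _ (hu P hP)
    have hbN : b ∈ N := by
      have h1 : a * b ∈ M := by
        have := (hmemP0 _).1 (hab 1)
        simpa using this
      have h2 : a * b - b * a ∈ M := hMrad (hcomm a b)
      refine (hmemN b).2 ?_
      simpa using M.sub_mem h1 h2
    have hNfg : N.FG := by
      by_contra hNfg
      have hNS : N ∈ S := ⟨hNrad, hNfg⟩
      exact hb (hMmax hNS hMN hbN)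
    -- now show M is f.g., contradiction
    obtain ⟨s, hs⟩ := hTfg
    have hdec : ∀ t : R, t ∈ (s : Set R) → ∃ p ∈ M, ∃ cc : R, p + cc * a = t := by
      intro t htmem
      have h1 : t ∈ M ⊔ Submodule.span R {a} := by
        rw [← hT, ← hs]; exact Submodule.subset_span htmem
      rw [Submodule.mem_sup] at h1
      obtain ⟨p, hp, q, hq, hpq⟩ := h1
      obtain ⟨cc, rfl⟩ := Submodule.mem_span_singleton.1 hq
      exact ⟨p, hp, cc, by simpa [smul_eq_mul] using hpq⟩
    choose p hp cc hcc using hdec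
    set f : R →ₗ[R] R := LinearMap.toSpanSingleton R R a with hf
    have hfapply : ∀ r : R, f r = r * a := fun r => by
      simp [hf, LinearMap.toSpanSingleton_apply, smul_eq_mul]
    set Vp : Submodule R R :=
      Submodule.span R (Set.range fun t : (s : Set R) => p t.1 t.2) with hVp
    set V : Submodule R R := Vp ⊔ N.map f with hV
    have hVfg : V.FG :=
      Submodule.FG.sup (Submodule.fg_span (Set.finite_range _)) (hNfg.map f)
    have hVpM : Vp ≤ M := by
      rw [hVp, Submodule.span_le]
      rintro z ⟨t, rfl⟩
      exact hp t.1 t.2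
    have hVM : V ≤ M := by
      refine sup_le hVpM ?_
      rintro z hz
      rw [Submodule.mem_map] at hz
      obtain ⟨xx, hxN, rfl⟩ := hz
      rw [hfapply]
      exact (hmemN xx).1 hxN
    have hMV : M ≤ V := by
      intro z hz
      have hzT : z ∈ T := Submodule.mem_sup_left hz
      have hsub : T ≤ Vp ⊔ Submodule.span R {a} := by
        rw [← hs, Submodule.span_le]
        intro t htmem
        rw [← hcc t htmem]
        refine Submodule.add_mem _ (Submodule.mem_sup_left (Submodule.subset_span ⟨⟨t, htmem⟩, rfl⟩)) ?_
        exact Submodule.mem_sup_right (Submodule.smul_mem _ (cc t htmem)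
          (Submodule.mem_span_singleton_self a))
      have h1 := hsub hzT
      rw [Submodule.mem_sup] at h1
      obtain ⟨v, hv, q, hq, hvq⟩ := h1
      obtain ⟨d, rfl⟩ := Submodule.mem_span_singleton.1 hq
      have hda : d * a ∈ M := by
        have : d * a = z - v := by rw [← hvq, smul_eq_mul]; abel
        rw [this]
        exact M.sub_mem hz (hVpM hv)
      have hdN : d ∈ N := (hmemN d).2 hda
      have : z = v + f d := by rw [hfapply]; rw [← hvq, smul_eq_mul]
      rw [this]
      exact Submodule.add_mem _ (Submodule.mem_sup_left hv) (Submodule.mem_sup_right (Submodule.mem_map_of_mem hdN))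
    exact hMS.2 ((le_antisymm hMV hVM) ▸ hVfg)
  obtain ⟨t, htset⟩ := hprimesFG P0 ⟨hne_top, hprime⟩
  refine hMS.2 ⟨t, SetLike.coe_injective ?_⟩
  rw [htset, hP0, TwoSidedIdeal.coe_mk']
end
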